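/- Under the hypotheses of the previous statement (Λ_t the solution of the Fermi–Walker ODE along a de Sitter worldline x̃_t), the map Λ_t sends the orthogonal complement x̃₀^⊥ = { v : g̃(x̃₀, v) = 0 } bijectively onto x̃_t^⊥. -/

import Mathlib

/-!
The generator `M_t w = g̃(ẋ̃_t, w) ã_t - g̃(ã_t, w) ẋ̃_t` is skew for `g̃`, and the constraints
`g̃(x̃, ẋ̃) = 0`, `g̃(x̃, ã) = -1` make `t ↦ g̃(x̃_t, Λ_t w)` stationary. Hence
`Λ_t` is a `g̃`-isometry, so it is injective (as `g̃` is nondegenerate) and thus bijective,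
and `g̃(x̃_t, Λ_t w) = g̃(x̃₀, w)` says precisely that `x̃₀^⊥` is the preimage of `x̃_t^⊥`.
-/

noncomputable def mink (x y : Fin 5 → ℝ) : ℝ :=
  x 0 * y 0 - x 1 * y 1 - x 2 * y 2 - x 3 * y 3 - x 4 * y 4

lemma mink_comm (x y : Fin 5 → ℝ) : mink x y = mink y x := by
  unfold mink; ring

lemma mink_smul_right (x y : Fin 5 → ℝ) (c : ℝ) : mink x (c • y) = c * mink x y := by
  simp only [mink, Pi.smul_apply, smul_eq_mul]; ring

lemma mink_sub_right (x y z : Fin 5 → ℝ) : mink x (y - z) = mink x y - mink x z := by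
  simp only [mink, Pi.sub_apply]; ring

lemma mink_single_one (z : Fin 5 → ℝ) (i : Fin 5) :
    mink z (Pi.single i 1) = if i = 0 then z i else -z i := by
  fin_cases i <;> simp [mink]

lemma eq_zero_of_forall_mink_eq_zero {z : Fin 5 → ℝ} (h : ∀ w, mink z w = 0) : z = 0 := by
  funext i
  have hi := h (Pi.single i 1)
  rw [mink_single_one] at hi
  split_ifs at hi <;> simp only [Pi.zero_apply] <;> linarith

lemma HasDerivAt.mink {f g : ℝ → Fin 5 → ℝ} {f' g' : Fin 5 → ℝ} {t : ℝ}
    (hf : HasDerivAt f f' t) (hg : HasDerivAt g g' t) :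
    HasDerivAt (fun s => mink (f s) (g s)) (mink f' (g t) + mink (f t) g') t := by
  have hfi := hasDerivAt_pi.1 hf
  have hgi := hasDerivAt_pi.1 hg
  exact ((((((hfi 0).mul (hgi 0)).sub ((hfi 1).mul (hgi 1))).sub
    ((hfi 2).mul (hgi 2))).sub ((hfi 3).mul (hgi 3))).sub ((hfi 4).mul (hgi 4))).congr_deriv
    (by unfold _root_.mink; ring)

lemma mink_eq_of_hasDerivAt {f g f' g' : ℝ → Fin 5 → ℝ}
    (hf : ∀ t, HasDerivAt f (f' t) t) (hg : ∀ t, HasDerivAt g (g' t) t)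
    (h : ∀ t, mink (f' t) (g t) + mink (f t) (g' t) = 0) (t : ℝ) :
    mink (f t) (g t) = mink (f 0) (g 0) := by
  have hd : ∀ s, HasDerivAt (fun s => mink (f s) (g s)) 0 s := fun s =>
    h s ▸ (hf s).mink (hg s)
  exact is_const_of_deriv_eq_zero (fun s => (hd s).differentiableAt) (fun s => (hd s).deriv) t 0

lemma injective_of_mink_map_map {L : (Fin 5 → ℝ) →ₗ[ℝ] (Fin 5 → ℝ)}
    (hL : ∀ u w, mink (L u) (L w) = mink u w) : Function.Injective L := by
  refine (injective_iff_map_eq_zero L).2 fun u hu => eq_zero_of_forall_mink_eq_zero fun w => ?_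
  rw [← hL, hu]
  simp [mink]

/-- The bivector `v ∧ a` acting on `ℝ⁵`: the generator `M_t` for `v = ẋ̃_t`, `a = ã_t`. -/
noncomputable def wedgeApply (v a w : Fin 5 → ℝ) : Fin 5 → ℝ :=
  mink v w • a - mink a w • v

lemma mink_wedgeApply_right (v a u w : Fin 5 → ℝ) :
    mink u (wedgeApply v a w) = mink v w * mink u a - mink a w * mink u v := by
  rw [wedgeApply, mink_sub_right, mink_smul_right, mink_smul_right]

lemma mink_wedgeApply_add_mink_wedgeApply (v a u w : Fin 5 → ℝ) :
    mink (wedgeApply v a u) w + mink u (wedgeApply v a w) = 0 := by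
  rw [mink_comm _ w, mink_wedgeApply_right, mink_wedgeApply_right,
    mink_comm w, mink_comm w, mink_comm u a, mink_comm u v]
  ring

lemma mink_add_mink_wedgeApply {x v a : Fin 5 → ℝ} (hxv : mink x v = 0) (hxa : mink x a = -1)
    (w : Fin 5 → ℝ) : mink v w + mink x (wedgeApply v a w) = 0 := by
  rw [mink_wedgeApply_right, hxv, hxa]
  ring

theorem stmt_9_general (x v a : ℝ → (Fin 5 → ℝ))
    (hx : ∀ t, HasDerivAt x (v t) t)
    (hxv : ∀ t, mink (x t) (v t) = 0)
    (hxa : ∀ t, mink (x t) (a t) = -1)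
    (M : ℝ → ((Fin 5 → ℝ) →L[ℝ] (Fin 5 → ℝ)))
    (hM : ∀ t w, M t w = mink (v t) w • a t - mink (a t) w • v t)
    (Λ : ℝ → ((Fin 5 → ℝ) →L[ℝ] (Fin 5 → ℝ)))
    (hΛ : ∀ t, HasDerivAt Λ ((M t).comp (Λ t)) t)
    (hΛ0 : Λ 0 = ContinuousLinearMap.id ℝ (Fin 5 → ℝ)) :
    ∀ t, Set.BijOn (Λ t) {w : Fin 5 → ℝ | mink (x 0) w = 0}
      {w : Fin 5 → ℝ | mink (x t) w = 0} := by
  have hM' : ∀ t, ⇑(M t) = wedgeApply (v t) (a t) := fun t => funext (hM t)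
  have hΛw : ∀ w t, HasDerivAt (fun s => Λ s w) (M t (Λ t w)) t := fun w t => by
    simpa using (hΛ t).clm_apply (hasDerivAt_const t w)
  have hnormal : ∀ t w, mink (x t) (Λ t w) = mink (x 0) w := fun t w => by
    simpa [hΛ0] using mink_eq_of_hasDerivAt hx (hΛw w)
      (fun s => hM' s ▸ mink_add_mink_wedgeApply (hxv s) (hxa s) _) t
  have hisom : ∀ t u w, mink (Λ t u) (Λ t w) = mink u w := fun t u w => by
    simpa [hΛ0] using mink_eq_of_hasDerivAt (hΛw u) (hΛw w)
      (fun s => hM' s ▸ mink_wedgeApply_add_mink_wedgeApply _ _ _ _) t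
  intro t
  have hinj : Function.Injective (Λ t : (Fin 5 → ℝ) →ₗ[ℝ] (Fin 5 → ℝ)) :=
    injective_of_mink_map_map (hisom t)
  have hbij : Function.Bijective (Λ t) := ⟨hinj, LinearMap.surjective_of_injective hinj⟩
  have hpre : {w | mink (x 0) w = 0} = Λ t ⁻¹' {w | mink (x t) w = 0} := by
    ext w
    exact iff_of_eq (congrArg (· = 0) (hnormal t w).symm)
  exact hpre ▸ hbij.bijOn_preimage

/-- Along a de Sitter worldline `x̃_t` (with velocity `v` and ambient
acceleration `a` satisfying `g̃(x̃,ẋ̃) = 0`, `g̃(x̃,ã) = -1`), the solution of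
the Fermi--Walker ODE `dΛ/dt = M_t ∘ Λ_t`, `Λ₀ = id`, with
`M_t = g̃(ẋ̃_t,·)ã_t - g̃(ã_t,·)ẋ̃_t`, maps the orthogonal
complement `x̃₀^⊥` bijectively onto `x̃_t^⊥` for every `t`. -/
theorem stmt_9 (x v a : ℝ → (Fin 5 → ℝ))
    (hdS : ∀ t, mink (x t) (x t) = -1)
    (hx : ∀ t, HasDerivAt x (v t) t)
    (hxv : ∀ t, mink (x t) (v t) = 0)
    (hxa : ∀ t, mink (x t) (a t) = -1)
    (M : ℝ → ((Fin 5 → ℝ) →L[ℝ] (Fin 5 → ℝ)))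
    (hM : ∀ t w, M t w = mink (v t) w • a t - mink (a t) w • v t)
    (Λ : ℝ → ((Fin 5 → ℝ) →L[ℝ] (Fin 5 → ℝ)))
    (hΛ : ∀ t, HasDerivAt Λ ((M t).comp (Λ t)) t)
    (hΛ0 : Λ 0 = ContinuousLinearMap.id ℝ (Fin 5 → ℝ)) :
    ∀ t, Set.BijOn (Λ t) {w : Fin 5 → ℝ | mink (x 0) w = 0}
      {w : Fin 5 → ℝ | mink (x t) w = 0} :=
  stmt_9_general x v a hx hxv hxa M hM Λ hΛ hΛ0
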